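/- arXiv:1911.11016 — 2 statements merged into one kernel-verified Lean document; each statement's English description precedes it below -/
import Mathlib

section
/- Let I = [0,1] be the unit interval with the metric induced from ℝ, and let A ⊆ B ⊆ I be finite subsets. Then |A|_Rips ≤ |B|_Rips. -/
open scoped BigOperators

/-- The Rips magnitude function of a finite subset `A` of a metric space:
`|tA|_Rips = Σ_{∅ ≠ B ⊆ A} (−1)^{#B−1} e^{−diam(B)·t}`. -/
noncomputable def ripsMag {Y : Type*} [MetricSpace Y] (A : Finset Y) (t : ℝ) : ℝ :=
  ∑ B ∈ A.powerset.filter (fun B => B.Nonempty),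
    (-1 : ℝ) ^ (B.card - 1) * Real.exp (-(Metric.diam (B : Set Y)) * t)

lemma diam_coe_finset (S : Finset ℝ) (hS : S.Nonempty) :
    Metric.diam (S : Set ℝ) = S.max' hS - S.min' hS := by
  have hmm : S.min' hS ≤ S.max' hS := S.min'_le _ (S.max'_mem hS)
  apply le_antisymm
  · apply Metric.diam_le_of_forall_dist_le (by linarith)
    intro a ha b hb
    rw [Real.dist_eq, abs_le]
    have h1 := S.min'_le a ha
    have h2 := S.min'_le b hb
    have h3 := S.le_max' a ha
    have h4 := S.le_max' b hb
    constructor <;> linarith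
  · have := Metric.dist_le_diam_of_mem (S.finite_toSet.isBounded)
      (by exact_mod_cast S.max'_mem hS) (by exact_mod_cast S.min'_mem hS)
    rwa [Real.dist_eq, abs_of_nonneg (by linarith)] at this

lemma finset_min'_eq (s : Finset ℝ) (hs : s.Nonempty) (y : ℝ) (hy : y ∈ s)
    (h : ∀ a ∈ s, y ≤ a) : s.min' hs = y :=
  le_antisymm (s.min'_le y hy) (Finset.le_min' _ _ _ h)

lemma finset_max'_eq (s : Finset ℝ) (hs : s.Nonempty) (y : ℝ) (hy : y ∈ s)
    (h : ∀ a ∈ s, a ≤ y) : s.max' hs = y :=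
  le_antisymm (Finset.max'_le _ _ _ h) (s.le_max' y hy)

lemma sum_pm_one (s : Finset ℝ) :
    ∑ T ∈ s.powerset, (-1 : ℝ) ^ T.card = if s = ∅ then 1 else 0 := by
  have := Finset.sum_powerset_neg_one_pow_card (x := s)
  have h2 : ((∑ m ∈ s.powerset, (-1 : ℤ) ^ m.card : ℤ) : ℝ)
      = ∑ T ∈ s.powerset, (-1 : ℝ) ^ T.card := by push_cast; rfl
  rw [← h2, this]
  split <;> norm_num

lemma oneSideL (x : ℝ) (L : Finset ℝ) (hL : ∀ a ∈ L, a ≤ x) :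
    0 ≤ ∑ T ∈ L.powerset, (-1 : ℝ) ^ T.card *
      Real.exp (-(Metric.diam ((insert x T : Finset ℝ) : Set ℝ))) := by
  classical
  induction L using Finset.strongInduction with
  | _ L ih =>
  rcases L.eq_empty_or_nonempty with rfl | hne
  · simp [Metric.diam_singleton]
  · set m := L.min' hne with hm
    have hmem : m ∈ L := L.min'_mem hne
    have hrw : L = insert m (L.erase m) := (Finset.insert_erase hmem).symm
    rw [hrw, Finset.sum_powerset_insert (Finset.notMem_erase _ _)]
    have hmx : m ≤ x := hL m hmem
    have hsecond : ∀ T ∈ (L.erase m).powerset,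
        (-1 : ℝ) ^ (insert m T).card *
          Real.exp (-(Metric.diam ((insert x (insert m T) : Finset ℝ) : Set ℝ)))
        = -Real.exp (-(x - m)) * (-1 : ℝ) ^ T.card := by
      intro T hT
      rw [Finset.mem_powerset] at hT
      have hmT : m ∉ T := fun h => Finset.notMem_erase _ _ (hT h)
      have hcard : (insert m T).card = T.card + 1 := Finset.card_insert_of_notMem hmT
      have hTL : ∀ a ∈ T, m ≤ a := fun a ha => L.min'_le a (Finset.mem_of_mem_erase (hT ha))
      have hTx : ∀ a ∈ T, a ≤ x := fun a ha => hL a (Finset.mem_of_mem_erase (hT ha))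
      have hnonemp : (insert x (insert m T)).Nonempty := Finset.insert_nonempty _ _
      have hdiam : Metric.diam ((insert x (insert m T) : Finset ℝ) : Set ℝ) = x - m := by
        rw [diam_coe_finset _ hnonemp,
          finset_max'_eq _ hnonemp x (Finset.mem_insert_self _ _) (by
            intro a ha
            rcases Finset.mem_insert.mp ha with rfl | ha
            · rfl
            rcases Finset.mem_insert.mp ha with rfl | ha
            · exact hmx
            · exact hTx a ha),
          finset_min'_eq _ hnonemp m (by simp) (by
            intro a ha
            rcases Finset.mem_insert.mp ha with rfl | ha
            · exact hmx
            rcases Finset.mem_insert.mp ha with rfl | ha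
            · exact le_refl m
            · exact hTL a ha)]
      rw [hdiam, hcard, pow_succ]
      ring
    rw [Finset.sum_congr rfl hsecond, ← Finset.mul_sum, sum_pm_one]
    rcases eq_or_ne (L.erase m) ∅ with he | he
    · rw [he, if_pos rfl]
      simp only [Finset.powerset_empty, Finset.sum_singleton, Finset.card_empty, pow_zero]
      have h1 : Metric.diam ((insert x (∅ : Finset ℝ) : Finset ℝ) : Set ℝ) = 0 := by
        simp
      rw [h1]
      have : Real.exp (-(x - m)) ≤ 1 := Real.exp_le_one_iff.mpr (by linarith)
      simp only [neg_zero, Real.exp_zero]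
      linarith
    · rw [if_neg he, mul_zero, add_zero]
      exact ih (L.erase m) (Finset.erase_ssubset hmem)
        (fun a ha => hL a (Finset.mem_of_mem_erase ha))

lemma oneSideR (x : ℝ) (R : Finset ℝ) (hR : ∀ a ∈ R, x ≤ a) :
    0 ≤ ∑ T ∈ R.powerset, (-1 : ℝ) ^ T.card *
      Real.exp (-(Metric.diam ((insert x T : Finset ℝ) : Set ℝ))) := by
  classical
  induction R using Finset.strongInduction with
  | _ R ih =>
  rcases R.eq_empty_or_nonempty with rfl | hne
  · simp [Metric.diam_singleton]
  · set m := R.max' hne with hm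
    have hmem : m ∈ R := R.max'_mem hne
    have hrw : R = insert m (R.erase m) := (Finset.insert_erase hmem).symm
    rw [hrw, Finset.sum_powerset_insert (Finset.notMem_erase _ _)]
    have hmx : x ≤ m := hR m hmem
    have hsecond : ∀ T ∈ (R.erase m).powerset,
        (-1 : ℝ) ^ (insert m T).card *
          Real.exp (-(Metric.diam ((insert x (insert m T) : Finset ℝ) : Set ℝ)))
        = -Real.exp (-(m - x)) * (-1 : ℝ) ^ T.card := by
      intro T hT
      rw [Finset.mem_powerset] at hT
      have hmT : m ∉ T := fun h => Finset.notMem_erase _ _ (hT h)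
      have hcard : (insert m T).card = T.card + 1 := Finset.card_insert_of_notMem hmT
      have hTR : ∀ a ∈ T, a ≤ m := fun a ha => R.le_max' a (Finset.mem_of_mem_erase (hT ha))
      have hTx : ∀ a ∈ T, x ≤ a := fun a ha => hR a (Finset.mem_of_mem_erase (hT ha))
      have hnonemp : (insert x (insert m T)).Nonempty := Finset.insert_nonempty _ _
      have hdiam : Metric.diam ((insert x (insert m T) : Finset ℝ) : Set ℝ) = m - x := by
        rw [diam_coe_finset _ hnonemp,
          finset_min'_eq _ hnonemp x (Finset.mem_insert_self _ _) (by
            intro a ha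
            rcases Finset.mem_insert.mp ha with rfl | ha
            · rfl
            rcases Finset.mem_insert.mp ha with rfl | ha
            · exact hmx
            · exact hTx a ha),
          finset_max'_eq _ hnonemp m (by simp) (by
            intro a ha
            rcases Finset.mem_insert.mp ha with rfl | ha
            · exact hmx
            rcases Finset.mem_insert.mp ha with rfl | ha
            · exact le_refl m
            · exact hTR a ha)]
      rw [hdiam, hcard, pow_succ]
      ring
    rw [Finset.sum_congr rfl hsecond, ← Finset.mul_sum, sum_pm_one]
    rcases eq_or_ne (R.erase m) ∅ with he | he
    · rw [he, if_pos rfl]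
      simp only [Finset.powerset_empty, Finset.sum_singleton, Finset.card_empty, pow_zero]
      have h1 : Metric.diam ((insert x (∅ : Finset ℝ) : Finset ℝ) : Set ℝ) = 0 := by
        simp
      rw [h1]
      have : Real.exp (-(m - x)) ≤ 1 := Real.exp_le_one_iff.mpr (by linarith)
      simp only [neg_zero, Real.exp_zero]
      linarith
    · rw [if_neg he, mul_zero, add_zero]
      exact ih (R.erase m) (Finset.erase_ssubset hmem)
        (fun a ha => hR a (Finset.mem_of_mem_erase ha))

lemma sum_powerset_union_mul (L : Finset ℝ) (u : Finset ℝ → ℝ) :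
    ∀ (R : Finset ℝ) (v : Finset ℝ → ℝ), Disjoint L R →
      ∑ S ∈ (L ∪ R).powerset, u (S ∩ L) * v (S ∩ R)
        = (∑ T ∈ L.powerset, u T) * (∑ U ∈ R.powerset, v U) := by
  classical
  intro R
  induction R using Finset.induction_on with
  | empty =>
    intro v _
    simp only [Finset.union_empty, Finset.inter_empty, Finset.powerset_empty,
      Finset.sum_singleton, ← Finset.sum_mul]
    refine congrArg (· * v ∅) (Finset.sum_congr rfl fun S hS => ?_)
    rw [Finset.inter_eq_left.mpr (Finset.mem_powerset.mp hS)]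
  | @insert a R' ha ih =>
    intro v hdisj
    have haL : a ∉ L := fun h => (Finset.disjoint_left.mp hdisj h) (Finset.mem_insert_self _ _)
    have haLR : a ∉ L ∪ R' := by simp [haL, ha]
    have hdisj' : Disjoint L R' := hdisj.mono_right (Finset.subset_insert _ _)
    rw [Finset.union_insert, Finset.sum_powerset_insert haLR,
      Finset.sum_powerset_insert ha]
    have h1 : ∑ S ∈ (L ∪ R').powerset, u (S ∩ L) * v (S ∩ insert a R')
        = ∑ S ∈ (L ∪ R').powerset, u (S ∩ L) * v (S ∩ R') := by
      refine Finset.sum_congr rfl fun S hS => ?_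
      have haS : a ∉ S := fun h => haLR (Finset.mem_powerset.mp hS h)
      rw [Finset.inter_insert_of_notMem haS]
    have h2 : ∑ S ∈ (L ∪ R').powerset, u ((insert a S) ∩ L) * v ((insert a S) ∩ insert a R')
        = ∑ S ∈ (L ∪ R').powerset, u (S ∩ L) * v (insert a (S ∩ R')) := by
      refine Finset.sum_congr rfl fun S hS => ?_
      have haS : a ∉ S := fun h => haLR (Finset.mem_powerset.mp hS h)
      rw [Finset.insert_inter_of_notMem haL,
        Finset.insert_inter_of_mem (Finset.mem_insert_self _ _),
        Finset.inter_insert_of_notMem haS]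
    rw [h1, h2, ih v hdisj', ih (fun U => v (insert a U)) hdisj']
    ring

lemma increment_nonneg_general (x : ℝ) (L R : Finset ℝ)
    (hL : ∀ a ∈ L, a ≤ x) (hR : ∀ a ∈ R, x ≤ a) (hdisj : Disjoint L R) :
    0 ≤ ∑ S ∈ (L ∪ R).powerset, (-1 : ℝ) ^ S.card *
      Real.exp (-(Metric.diam ((insert x S : Finset ℝ) : Set ℝ))) := by
  classical
  have key : ∀ S ∈ (L ∪ R).powerset,
      (-1 : ℝ) ^ S.card * Real.exp (-(Metric.diam ((insert x S : Finset ℝ) : Set ℝ)))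
      = ((-1 : ℝ) ^ (S ∩ L).card *
          Real.exp (-(Metric.diam ((insert x (S ∩ L) : Finset ℝ) : Set ℝ)))) *
        ((-1 : ℝ) ^ (S ∩ R).card *
          Real.exp (-(Metric.diam ((insert x (S ∩ R) : Finset ℝ) : Set ℝ)))) := by
    intro S hS
    rw [Finset.mem_powerset] at hS
    have hSL : ∀ a ∈ S ∩ L, a ≤ x := fun a ha => hL a (Finset.mem_of_mem_inter_right ha)
    have hSR : ∀ a ∈ S ∩ R, x ≤ a := fun a ha => hR a (Finset.mem_of_mem_inter_right ha)
    have hdisj2 : Disjoint (S ∩ L) (S ∩ R) :=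
      hdisj.mono (Finset.inter_subset_right) (Finset.inter_subset_right)
    have hScover : (S ∩ L) ∪ (S ∩ R) = S := by
      rw [← Finset.inter_union_distrib_left, Finset.inter_eq_left]
      exact hS
    have hcard : S.card = (S ∩ L).card + (S ∩ R).card := by
      have h := Finset.card_union_of_disjoint hdisj2
      rw [hScover] at h
      exact h
    have hne : ∀ T : Finset ℝ, (insert x T).Nonempty := fun T => Finset.insert_nonempty _ _
    have hminS : (insert x S).min' (hne S) = (insert x (S ∩ L)).min' (hne _) := by
      apply le_antisymm
      · apply Finset.le_min'
        intro y hy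
        rcases Finset.mem_insert.mp hy with hyx | hy
        · rw [hyx]; exact Finset.min'_le _ _ (Finset.mem_insert_self _ _)
        · exact Finset.min'_le _ _ (Finset.mem_insert_of_mem (Finset.mem_of_mem_inter_left hy))
      · apply Finset.le_min'
        intro y hy
        rcases Finset.mem_insert.mp hy with hyx | hy
        · rw [hyx]; exact Finset.min'_le _ _ (Finset.mem_insert_self _ _)
        · rcases Finset.mem_union.mp (hS hy) with h | h
          · exact Finset.min'_le _ _ (Finset.mem_insert_of_mem (Finset.mem_inter.mpr ⟨hy, h⟩))
          · exact le_trans (Finset.min'_le _ _ (Finset.mem_insert_self _ _)) (hR y h)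
    have hmaxS : (insert x S).max' (hne S) = (insert x (S ∩ R)).max' (hne _) := by
      apply le_antisymm
      · apply Finset.max'_le
        intro y hy
        rcases Finset.mem_insert.mp hy with hyx | hy
        · rw [hyx]; exact Finset.le_max' _ _ (Finset.mem_insert_self _ _)
        · rcases Finset.mem_union.mp (hS hy) with h | h
          · exact le_trans (hL y h) (Finset.le_max' _ _ (Finset.mem_insert_self _ _))
          · exact Finset.le_max' _ _ (Finset.mem_insert_of_mem (Finset.mem_inter.mpr ⟨hy, h⟩))
      · apply Finset.max'_le
        intro y hy
        rcases Finset.mem_insert.mp hy with hyx | hy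
        · rw [hyx]; exact Finset.le_max' _ _ (Finset.mem_insert_self _ _)
        · exact Finset.le_max' _ _ (Finset.mem_insert_of_mem (Finset.mem_of_mem_inter_left hy))
    have hmaxL : (insert x (S ∩ L)).max' (hne _) = x :=
      finset_max'_eq _ _ x (Finset.mem_insert_self _ _) (by
        intro a ha
        rcases Finset.mem_insert.mp ha with hax | ha
        · rw [hax]
        · exact hSL a ha)
    have hminR : (insert x (S ∩ R)).min' (hne _) = x :=
      finset_min'_eq _ _ x (Finset.mem_insert_self _ _) (by
        intro a ha
        rcases Finset.mem_insert.mp ha with hax | ha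
        · rw [hax]
        · exact hSR a ha)
    have hdiam : Metric.diam ((insert x S : Finset ℝ) : Set ℝ)
        = Metric.diam ((insert x (S ∩ L) : Finset ℝ) : Set ℝ)
          + Metric.diam ((insert x (S ∩ R) : Finset ℝ) : Set ℝ) := by
      rw [diam_coe_finset _ (hne S), diam_coe_finset _ (hne (S ∩ L)),
        diam_coe_finset _ (hne (S ∩ R)), hminS, hmaxS, hmaxL, hminR]
      ring
    rw [hdiam, hcard, pow_add, neg_add, Real.exp_add]
    ring
  rw [Finset.sum_congr rfl key, sum_powerset_union_mul L
    (fun T => (-1 : ℝ) ^ T.card * Real.exp (-(Metric.diam ((insert x T : Finset ℝ) : Set ℝ)))) R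
    (fun U => (-1 : ℝ) ^ U.card * Real.exp (-(Metric.diam ((insert x U : Finset ℝ) : Set ℝ))))
    hdisj]
  exact mul_nonneg (oneSideL x L hL) (oneSideR x R hR)

lemma increment_nonneg (x : ℝ) (A : Finset ℝ) :
    0 ≤ ∑ S ∈ A.powerset, (-1 : ℝ) ^ S.card *
      Real.exp (-(Metric.diam ((insert x S : Finset ℝ) : Set ℝ))) := by
  classical
  have hunion : A.filter (fun a => a < x) ∪ A.filter (fun a => ¬ a < x) = A :=
    Finset.filter_union_filter_not_eq _ A
  have h := increment_nonneg_general x (A.filter (fun a => a < x))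
    (A.filter (fun a => ¬ a < x))
    (fun a ha => le_of_lt (Finset.mem_filter.mp ha).2)
    (fun a ha => le_of_not_gt (Finset.mem_filter.mp ha).2)
    (Finset.disjoint_filter_filter_not A A _)
  rwa [hunion] at h

lemma ripsMag_insert (x : ℝ) (A : Finset ℝ) (hx : x ∉ A) :
    ripsMag (insert x A) 1 = ripsMag A 1 + ∑ S ∈ A.powerset, (-1 : ℝ) ^ S.card *
      Real.exp (-(Metric.diam ((insert x S : Finset ℝ) : Set ℝ))) := by
  classical
  unfold ripsMag
  rw [Finset.sum_filter, Finset.sum_filter, Finset.sum_powerset_insert hx]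
  congr 1
  refine Finset.sum_congr rfl fun S hS => ?_
  rw [Finset.mem_powerset] at hS
  have hxS : x ∉ S := fun h => hx (hS h)
  rw [if_pos (Finset.insert_nonempty _ _), Finset.card_insert_of_notMem hxS,
    Nat.add_sub_cancel, mul_one]

/-- if `A ⊆ B` are finite subsets of the unit interval `[0,1] ⊆ ℝ`,
then `|A|_Rips ≤ |B|_Rips`. -/
theorem ripsMag_mono_of_subset_unitInterval
    (A B : Finset ℝ) (hB : (B : Set ℝ) ⊆ Set.Icc (0 : ℝ) 1) (hAB : A ⊆ B) :
    ripsMag A 1 ≤ ripsMag B 1 := by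
  classical
  clear hB
  have key : ∀ n (A B : Finset ℝ), A ⊆ B → (B \ A).card = n →
      ripsMag A 1 ≤ ripsMag B 1 := by
    intro n
    induction n with
    | zero =>
      intro A B hAB h0
      have hBA : B \ A = ∅ := Finset.card_eq_zero.mp h0
      have : B ⊆ A := by
        intro b hb
        by_contra hbA
        exact absurd (Finset.mem_sdiff.mpr ⟨hb, hbA⟩) (by simp [hBA])
      rw [Finset.Subset.antisymm hAB this]
    | succ n ih =>
      intro A B hAB hcard
      have hne : (B \ A).Nonempty := Finset.card_pos.mp (by omega)
      obtain ⟨x, hx⟩ := hne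
      obtain ⟨hxB, hxA⟩ := Finset.mem_sdiff.mp hx
      have step : ripsMag A 1 ≤ ripsMag (insert x A) 1 := by
        rw [ripsMag_insert x A hxA]
        linarith [increment_nonneg x A]
      refine le_trans step (ih (insert x A) B (Finset.insert_subset hxB hAB) ?_)
      rw [Finset.sdiff_insert, Finset.card_erase_of_mem hx, hcard]
      omega
  exact key _ A B hAB rfl
end

section
/- Let I = [0,1] be the unit interval with the metric induced from ℝ. Then for every t > 0, the supremum of |tA|_Rips over all finite nonempty subsets A ⊆ I equals 1 + t. -/
open scoped BigOperators

/-! Adding a point `m` to the right of a finite `A ⊂ ℝ` with maximum `a` changes the Rips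
magnitude by `1 - e^{-(m - a)t}`: among the subsets containing `m`, the terms of `B ∪ {m}` and
`B ∪ {a, m}` with `B ≠ ∅` cancel, as both sets have the same diameter. Hence
`|tA|_Rips = 1 + Σ (1 - e^{-gt})` over the gaps `g` of `A`. Since `1 - e^{-gt} ≤ gt` this is at
most `1 + t·diam A ≤ 1 + t`, while `n + 1` equally spaced points give
`1 + n(1 - e^{-t/n}) → 1 + t`. -/

open Finset Filter Topology Real

lemma Finset.sum_powerset_insert_neg_one_pow_card_mul {α R : Type*} [DecidableEq α] [CommRing R]
    {s : Finset α} {a : α} (ha : a ∉ s) {f : Finset α → R}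
    (hf : ∀ B ⊆ s, B.Nonempty → f (insert a B) = f B) :
    ∑ B ∈ (insert a s).powerset, (-1) ^ B.card * f B = f ∅ - f {a} := by
  rw [sum_powerset_insert ha, ← sum_add_distrib, sum_eq_single (∅ : Finset α)]
  · simp [sub_eq_add_neg]
  · intro B hB hBe
    have hBs := mem_powerset.1 hB
    rw [hf B hBs (nonempty_iff_ne_empty.2 hBe), card_insert_of_notMem (notMem_mono hBs ha),
      pow_succ]
    ring
  · exact fun h => absurd (empty_mem_powerset s) h

lemma ripsMag_insert_s9 {Y : Type*} [MetricSpace Y] [DecidableEq Y] {A : Finset Y} {m : Y}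
    (hm : m ∉ A) (t : ℝ) :
    ripsMag (insert m A) t = ripsMag A t +
      ∑ B ∈ A.powerset, (-1) ^ B.card * exp (-Metric.diam (↑(insert m B) : Set Y) * t) := by
  simp only [ripsMag, sum_filter]
  rw [sum_powerset_insert hm]
  congr 1
  refine sum_congr rfl fun B hB => ?_
  rw [if_pos (B.insert_nonempty m), card_insert_of_notMem (notMem_mono (mem_powerset.1 hB) hm),
    Nat.add_sub_cancel]

lemma ripsMag_singleton {Y : Type*} [MetricSpace Y] (x : Y) (t : ℝ) : ripsMag {x} t = 1 := by
  classical
  rw [← insert_empty, ripsMag_insert_s9 (notMem_empty x)]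
  simp [ripsMag, filter_singleton]

lemma Real.diam_finset_coe {B : Finset ℝ} (hB : B.Nonempty) :
    Metric.diam (B : Set ℝ) = B.max' hB - B.min' hB := by
  rw [Real.diam_eq B.finite_toSet.isBounded, hB.csSup_eq_max', hB.csInf_eq_min']

lemma Real.diam_insert_finset_of_forall_lt {B : Finset ℝ} (hB : B.Nonempty) {m : ℝ}
    (hm : ∀ x ∈ B, x < m) :
    Metric.diam (↑(insert m B) : Set ℝ) = m - B.min' hB := by
  rw [diam_finset_coe (B.insert_nonempty m), max'_insert m B hB, min'_insert m B hB,
    max_eq_left ((B.max'_lt_iff hB).2 hm).le,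
    min_eq_right ((hm _ (B.min'_mem hB)).le.trans' (B.min'_le _ (B.min'_mem hB)))]

lemma sum_powerset_neg_one_pow_card_mul_exp_diam_insert {A : Finset ℝ} {a m : ℝ}
    (ha : IsGreatest (A : Set ℝ) a) (ham : a < m) (t : ℝ) :
    ∑ B ∈ A.powerset, (-1) ^ B.card * exp (-Metric.diam (↑(insert m B) : Set ℝ) * t)
      = 1 - exp (-(m - a) * t) := by
  rw [← insert_erase (mem_coe.1 ha.1),
    sum_powerset_insert_neg_one_pow_card_mul (notMem_erase a A)]
  · rw [insert_empty, coe_singleton, Metric.diam_singleton, coe_pair, Metric.diam_pair,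
      Real.dist_eq, abs_of_pos (sub_pos.2 ham)]
    simp
  · intro B hB hBne
    have hBa : ∀ x ∈ B, x < a := fun x hx =>
      lt_of_le_of_ne (ha.2 (mem_of_mem_erase (hB hx))) (ne_of_mem_erase (hB hx))
    have hBm : ∀ x ∈ B, x < m := fun x hx => (hBa x hx).trans ham
    have hmin : (insert a B).min' (B.insert_nonempty a) = B.min' hBne := by
      rw [min'_insert a B hBne, min_eq_right (hBa _ (B.min'_mem hBne)).le]
    rw [diam_insert_finset_of_forall_lt (B.insert_nonempty a), hmin,
      diam_insert_finset_of_forall_lt hBne hBm]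
    intro x hx
    rcases mem_insert.1 hx with rfl | hx
    exacts [ham, hBm x hx]

lemma ripsMag_insert_of_isGreatest {A : Finset ℝ} {a m : ℝ} (ha : IsGreatest (A : Set ℝ) a)
    (ham : a < m) (t : ℝ) :
    ripsMag (insert m A) t = ripsMag A t + 1 - exp (-(m - a) * t) := by
  have hm : m ∉ A := fun h => (ha.2 h).not_gt ham
  rw [ripsMag_insert_s9 hm, sum_powerset_neg_one_pow_card_mul_exp_diam_insert ha ham]
  ring

lemma one_sub_exp_neg_le (u : ℝ) : 1 - exp (-u) ≤ u := by
  linarith [add_one_le_exp (-u)]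

lemma ripsMag_le_one_add_mul_diam (A : Finset ℝ) (t : ℝ) :
    ripsMag A t ≤ 1 + t * Metric.diam (A : Set ℝ) := by
  induction A using Finset.induction_on_max with
  | empty => simp [ripsMag, filter_singleton]
  | insert a s hs ih =>
    rcases s.eq_empty_or_nonempty with rfl | hne
    · simp [ripsMag_singleton]
    have hgap := one_sub_exp_neg_le ((a - s.max' hne) * t)
    rw [← neg_mul] at hgap
    rw [ripsMag_insert_of_isGreatest (s.isGreatest_max' hne) (hs _ (s.max'_mem hne)),
      diam_insert_finset_of_forall_lt hne hs]
    rw [diam_finset_coe hne] at ih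
    linarith

lemma ripsMag_image_range_mul {c : ℝ} (hc : 0 < c) (t : ℝ) (n : ℕ) :
    ripsMag ((range (n + 1)).image fun k : ℕ => (k : ℝ) * c) t = 1 + n * (1 - exp (-c * t)) := by
  induction n with
  | zero => simp [ripsMag_singleton]
  | succ n ih =>
    have hgreatest : IsGreatest (↑((range (n + 1)).image fun k : ℕ => (k : ℝ) * c)) (n * c) := by
      refine ⟨mem_coe.2 (mem_image_of_mem _ (self_mem_range_succ n)), ?_⟩
      intro x hx
      obtain ⟨k, hk, rfl⟩ := mem_image.1 (mem_coe.1 hx)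
      gcongr
      exact_mod_cast Nat.lt_succ_iff.1 (mem_range.1 hk)
    rw [range_add_one, image_insert, ripsMag_insert_of_isGreatest hgreatest (by push_cast; linarith),
      ih]
    push_cast
    ring_nf

lemma div_one_add_le_one_sub_exp_neg {u : ℝ} (hu : 0 ≤ u) : u / (1 + u) ≤ 1 - exp (-u) := by
  have hexp : exp (-u) ≤ (1 + u)⁻¹ := by
    rw [exp_neg]
    exact inv_anti₀ (by positivity) (by linarith [add_one_le_exp u])
  have : u / (1 + u) = 1 - (1 + u)⁻¹ := by field_simp; ring
  linarith

lemma tendsto_nat_mul_one_sub_exp_neg_inv_mul {t : ℝ} (ht : 0 ≤ t) :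
    Tendsto (fun n : ℕ => n * (1 - exp (-(n : ℝ)⁻¹ * t))) atTop (𝓝 t) := by
  have hlower : Tendsto (fun n : ℕ => t / (1 + t / n)) atTop (𝓝 t) := by
    have hden := (tendsto_const_div_atTop_nhds_zero_nat t).const_add 1
    have h := (tendsto_const_nhds (x := t)).div hden (by norm_num)
    rwa [add_zero, div_one] at h
  refine tendsto_of_tendsto_of_tendsto_of_le_of_le' hlower tendsto_const_nhds ?_ ?_
  all_goals
    filter_upwards [eventually_gt_atTop 0] with n hn
    have hn' : (0 : ℝ) < n := by exact_mod_cast hn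
    rw [neg_mul, inv_mul_eq_div]
  · calc t / (1 + t / n) = n * (t / n / (1 + t / n)) := by field_simp
      _ ≤ _ := by gcongr; exact div_one_add_le_one_sub_exp_neg (by positivity)
  · calc _ ≤ n * (t / n) := by gcongr; exact one_sub_exp_neg_le _
      _ = t := by field_simp

/-- for every `t > 0`, the supremum of `|tA|_Rips` over all finite
nonempty subsets `A` of the unit interval `[0,1]` equals `1 + t`. -/
theorem ripsMag_unitInterval_isLUB (t : ℝ) (ht : 0 < t) :
    IsLUB {x : ℝ | ∃ A : Finset ℝ, (A : Set ℝ) ⊆ Set.Icc (0 : ℝ) 1 ∧ A.Nonempty ∧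
      x = ripsMag A t} (1 + t) := by
  constructor
  · rintro _ ⟨A, hA, -, rfl⟩
    have hdiam : Metric.diam (A : Set ℝ) ≤ 1 := by
      simpa [Real.diam_Icc zero_le_one] using Metric.diam_mono hA (Metric.isBounded_Icc 0 1)
    calc ripsMag A t ≤ 1 + t * Metric.diam (A : Set ℝ) := ripsMag_le_one_add_mul_diam A t
      _ ≤ 1 + t := by nlinarith
  · intro b hb
    refine le_of_tendsto ((tendsto_nat_mul_one_sub_exp_neg_inv_mul ht.le).const_add 1) ?_
    filter_upwards [eventually_gt_atTop 0] with n hn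
    have hn' : (0 : ℝ) < n := by exact_mod_cast hn
    refine hb ⟨(range (n + 1)).image fun k : ℕ => (k : ℝ) * (n : ℝ)⁻¹, ?_, by simp,
      (ripsMag_image_range_mul (inv_pos.2 hn') t n).symm⟩
    intro x hx
    obtain ⟨k, hk, rfl⟩ := mem_image.1 (mem_coe.1 hx)
    have hkn : (k : ℝ) ≤ n := by exact_mod_cast Nat.lt_succ_iff.1 (mem_range.1 hk)
    rw [← div_eq_mul_inv]
    exact ⟨by positivity, div_le_one_of_le₀ hkn hn'.le⟩
end
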